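/- For every integer n ≥ 2, with N and N' the 2n×2n real matrices defined as: diagonal entries 4 at odd positions and 3 at even positions, entries −1 at positions (j, j+1) and (j+1, j) for 1 ≤ j ≤ 2n−1, corner entries (1,2n) and (2n,1) equal to −1 for N and +1 for N', and 0 elsewhere, the sums of the (2n−1)×(2n−1) principal minors agree and satisfy Σ_{i=1}^{2n} det(N({i}|{i})) = Σ_{i=1}^{2n} det(N'({i}|{i})) = (7√6/192)·[(4 − 2√6)(√3−√2)^{2n−2} − (4 + 2√6)(√3+√2)^{2n−2}] + (7√3/48)·[(4n − 2√6·n + 1)(√3−√2)^{2n−1} + (4n + 2√6·n + 1)(√3+√2)^{2n−1}], where M({i}|{i}) denotes the submatrix of M obtained by deleting the i-th row and the i-th column. -/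

import Mathlib

open Matrix Real Finset

/-- The `2n × 2n` matrix `N`: diagonal entries `4` at odd (1-indexed) positions and
`3` at even positions, entries `−1` on the first super and sub diagonals and at the
corners `(1,2n)`, `(2n,1)`, and `0` elsewhere. -/
def Nmat (n : ℕ) : Matrix (Fin (2 * n)) (Fin (2 * n)) ℝ :=
  Matrix.of fun a b =>
    if a = b then (if a.val % 2 = 0 then 4 else 3)
    else if a.val + 1 = b.val ∨ b.val + 1 = a.val then -1
    else if (a.val = 0 ∧ b.val = 2 * n - 1) ∨ (b.val = 0 ∧ a.val = 2 * n - 1) then -1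
    else 0

/-- The `2n × 2n` matrix `N'`: identical to `N` except that the corner entries
`(1,2n)` and `(2n,1)` equal `+1`. -/
def Nmat' (n : ℕ) : Matrix (Fin (2 * n)) (Fin (2 * n)) ℝ :=
  Matrix.of fun a b =>
    if a = b then (if a.val % 2 = 0 then 4 else 3)
    else if a.val + 1 = b.val ∨ b.val + 1 = a.val then -1
    else if (a.val = 0 ∧ b.val = 2 * n - 1) ∨ (b.val = 0 ∧ a.val = 2 * n - 1) then 1
    else 0

/-- The monotone embedding of `Fin (m − 1)` into `Fin m` skipping the index `i`;
used to form the principal submatrix `M({i}|{i})` obtained by deleting the `i`-th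
row and the `i`-th column. -/
def delIdx {m : ℕ} (i : Fin m) (j : Fin (m - 1)) : Fin m :=
  if h : j.val < i.val then ⟨j.val, h.trans i.isLt⟩
  else ⟨j.val + 1, by have := j.isLt; omega⟩

/-! ### Auxiliary machinery -/

/-- The cyclic matrix with corner entry `e`; `Nmat n = cyc n (-1)`, `Nmat' n = cyc n 1`. -/
def cyc (n : ℕ) (e : ℝ) : Matrix (Fin (2 * n)) (Fin (2 * n)) ℝ :=
  Matrix.of fun a b =>
    if a = b then (if a.val % 2 = 0 then 4 else 3)
    else if a.val + 1 = b.val ∨ b.val + 1 = a.val then -1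
    else if (a.val = 0 ∧ b.val = 2 * n - 1) ∨ (b.val = 0 ∧ a.val = 2 * n - 1) then e
    else 0

/-- A generic tridiagonal matrix. -/
def tri (d b c : ℕ → ℝ) (m : ℕ) : Matrix (Fin m) (Fin m) ℝ :=
  Matrix.of fun i j =>
    if i.val = j.val then d i.val
    else if i.val + 1 = j.val then b i.val
    else if j.val + 1 = i.val then c j.val
    else 0

lemma tri_det (d b c : ℕ → ℝ) (m : ℕ) :
    (tri d b c (m+2)).det =
      d 0 * (tri (fun j => d (j+1)) (fun j => b (j+1)) (fun j => c (j+1)) (m+1)).det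
      - b 0 * c 0 * (tri (fun j => d (j+2)) (fun j => b (j+2)) (fun j => c (j+2)) m).det := by
  have key : (tri d b c (m+2)).det = ∑ j : Fin (m+2), (-1:ℝ) ^ (j : ℕ) *
      tri d b c (m+2) 0 j * ((tri d b c (m+2)).submatrix Fin.succ j.succAbove).det :=
    det_succ_row_zero _
  rw [key, Fin.sum_univ_succ, Fin.sum_univ_succ]
  have hz : ∀ j : Fin m, tri d b c (m+2) 0 j.succ.succ = 0 := by
    intro j
    simp only [tri, of_apply, Fin.val_zero, Fin.val_succ]
    simp
  rw [Finset.sum_eq_zero (fun j _ => by rw [hz j]; ring)]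
  have h00 : tri d b c (m+2) 0 0 = d 0 := by simp [tri]
  have h01 : tri d b c (m+2) 0 (Fin.succ 0) = b 0 := by
    simp only [tri, of_apply, Fin.val_zero, Fin.val_succ]
    norm_num
  have hA : (tri d b c (m+2)).submatrix Fin.succ ((0 : Fin (m+2)).succAbove)
      = tri (fun j => d (j+1)) (fun j => b (j+1)) (fun j => c (j+1)) (m+1) := by
    rw [Fin.succAbove_zero]
    ext i j
    simp only [submatrix_apply, tri, of_apply, Fin.val_succ]
    split_ifs <;> first | rfl | omega
  have hB : ((tri d b c (m+2)).submatrix Fin.succ ((Fin.succ 0 : Fin (m+2)).succAbove)).det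
      = c 0 * (tri (fun j => d (j+2)) (fun j => b (j+2)) (fun j => c (j+2)) m).det := by
    have key2 : ((tri d b c (m+2)).submatrix Fin.succ ((Fin.succ 0 : Fin (m+2)).succAbove)).det
        = ∑ i : Fin (m+1), (-1:ℝ) ^ (i : ℕ) *
          ((tri d b c (m+2)).submatrix Fin.succ ((Fin.succ 0 : Fin (m+2)).succAbove)) i 0 *
          (((tri d b c (m+2)).submatrix Fin.succ
            ((Fin.succ 0 : Fin (m+2)).succAbove)).submatrix i.succAbove Fin.succ).det :=
      det_succ_column_zero _
    rw [key2, Fin.sum_univ_succ]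
    have h0v : (((Fin.succ 0 : Fin (m+2)).succAbove 0) : ℕ) = 0 := by
      rw [Fin.succAbove_of_castSucc_lt _ _ (by simp [Fin.lt_def])]
      rfl
    have hcol : ∀ i : Fin m, ((tri d b c (m+2)).submatrix Fin.succ
        ((Fin.succ 0 : Fin (m+2)).succAbove)) i.succ 0 = 0 := by
      intro i
      simp only [submatrix_apply, tri, of_apply, Fin.val_succ, h0v]
      rw [if_neg (by omega), if_neg (by omega), if_neg (by omega)]
    rw [Finset.sum_eq_zero (fun i _ => by rw [hcol i]; ring)]
    have hB00 : ((tri d b c (m+2)).submatrix Fin.succ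
        ((Fin.succ 0 : Fin (m+2)).succAbove)) 0 0 = c 0 := by
      simp only [submatrix_apply, tri, of_apply, h0v]
      have h1 : ((Fin.succ (0 : Fin (m+1)) : Fin (m+2)) : ℕ) = 1 := rfl
      rw [h1, if_neg (by omega), if_neg (by omega), if_pos rfl]
    have hBsub : ((tri d b c (m+2)).submatrix Fin.succ
          ((Fin.succ 0 : Fin (m+2)).succAbove)).submatrix ((0 : Fin (m+1)).succAbove) Fin.succ
        = tri (fun j => d (j+2)) (fun j => b (j+2)) (fun j => c (j+2)) m := by
      rw [Fin.succAbove_zero]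
      ext i j
      have hcv : (((Fin.succ 0 : Fin (m+2)).succAbove j.succ) : ℕ) = j.val + 2 := by
        rw [Fin.succAbove_of_le_castSucc _ _ (by simp [Fin.le_def])]
        rfl
      simp only [submatrix_apply, tri, of_apply, Fin.val_succ, hcv]
      split_ifs <;> first | rfl | omega
    rw [hB00, hBsub]
    simp
  rw [h00, h01, hA, hB]
  simp only [Fin.val_zero, Fin.val_succ, pow_zero, pow_one, zero_add]
  ring

/-- The determinant of the alternating `4/3` tridiagonal matrix, started with
parity `p`, of size `m`. -/
noncomputable def W : ℕ → ℕ → ℝ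
  | _, 0 => 1
  | p, 1 => if p % 2 = 0 then 4 else 3
  | p, (m+2) => (if p % 2 = 0 then (4:ℝ) else 3) * W (p+1) (m+1) - W p m
  termination_by p m => m

lemma W_congr : ∀ m p q, p % 2 = q % 2 → W p m = W q m := by
  intro m
  induction m using Nat.strong_induction_on with
  | _ m ih =>
    match m with
    | 0 => intro p q _; simp [W]
    | 1 => intro p q h; simp only [W, h]
    | (m+2) =>
      intro p q h
      simp only [W, h]
      rw [ih (m+1) (by omega) (p+1) (q+1) (by omega), ih m (by omega) p q h]

lemma tri_det_W : ∀ m p (d b c : ℕ → ℝ),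
    (∀ j, d j = if (p + j) % 2 = 0 then 4 else 3) → (∀ j, b j * c j = 1) →
    (tri d b c m).det = W p m := by
  intro m
  induction m using Nat.strong_induction_on with
  | _ m ih =>
    match m with
    | 0 => intro p d b c _ _; simp [W, tri, Matrix.det_fin_zero]
    | 1 =>
      intro p d b c hd _
      rw [Matrix.det_fin_one]
      show d 0 = W p 1
      rw [hd 0]
      simp [W]
    | (m+2) =>
      intro p d b c hd hbc
      rw [tri_det]
      rw [ih (m+1) (by omega) (p+1) _ _ _
        (fun j => by rw [hd (j+1), show p+(j+1) = (p+1)+j from by omega]) (fun j => hbc (j+1))]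
      rw [ih m (by omega) p _ _ _
        (fun j => by rw [hd (j+2), show p+(j+2) = (p+j)+2 from by omega, Nat.add_mod_right])
        (fun j => hbc (j+2))]
      rw [hd 0, hbc 0]
      simp [W]

lemma cyc_apply (n : ℕ) (e : ℝ) (a b : Fin (2*n)) : cyc n e a b =
    if a.val = b.val then (if a.val % 2 = 0 then 4 else 3)
    else if a.val + 1 = b.val ∨ b.val + 1 = a.val then -1
    else if (a.val = 0 ∧ b.val = 2 * n - 1) ∨ (b.val = 0 ∧ a.val = 2 * n - 1) then e
    else 0 := by
  simp [cyc, Fin.ext_iff]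

set_option maxHeartbeats 1600000 in
lemma minor_det (n : ℕ) (hn : 2 ≤ n) (e : ℝ) (he : e * e = 1) (i : Fin (2*n)) :
    ((cyc n e).submatrix (delIdx i) (delIdx i)).det = W (i.val + 1) (2*n - 1) := by
  have hiv : i.val < 2*n := i.isLt
  set iv := i.val with hivdef
  have hrep : ∀ j : Fin (2*n-1),
      (iv + 1 + j.val < 2*n ∧ (iv + 1 + j.val) % (2*n) = iv + 1 + j.val) ∨
      (2*n ≤ iv + 1 + j.val ∧ (iv + 1 + j.val) % (2*n) = iv + 1 + j.val - 2*n) := by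
    intro j
    have hj := j.isLt
    rcases lt_or_ge (iv + 1 + j.val) (2*n) with h | h
    · exact Or.inl ⟨h, Nat.mod_eq_of_lt h⟩
    · refine Or.inr ⟨h, ?_⟩
      rw [Nat.mod_eq_sub_mod h, Nat.mod_eq_of_lt (by omega)]
  have hmod : ∀ j : Fin (2*n-1), (iv + 1 + j.val) % (2*n) < 2*n :=
    fun j => Nat.mod_lt _ (by omega)
  set ρ : Fin (2*n-1) → Fin (2*n) := fun j => ⟨(iv + 1 + j.val) % (2*n), hmod j⟩ with hρ
  have hρinj : Function.Injective ρ := by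
    intro j k h
    have hv : (iv + 1 + j.val) % (2*n) = (iv + 1 + k.val) % (2*n) := congrArg Fin.val h
    have hj := j.isLt; have hk := k.isLt
    rcases hrep j with ⟨h1,h2⟩ | ⟨h1,h2⟩ <;> rcases hrep k with ⟨h3,h4⟩ | ⟨h3,h4⟩ <;>
      rw [h2, h4] at hv <;> exact Fin.ext (by omega)
  have hne : ∀ j : Fin (2*n-1), (iv + 1 + j.val) % (2*n) ≠ iv := by
    intro j
    have hj := j.isLt
    rcases hrep j with ⟨h1,h2⟩ | ⟨h1,h2⟩ <;> rw [h2] <;> omega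
  set σ : Fin (2*n-1) → Fin (2*n-1) := fun j =>
    if h : (iv + 1 + j.val) % (2*n) < iv then ⟨(iv + 1 + j.val) % (2*n), by omega⟩
    else ⟨(iv + 1 + j.val) % (2*n) - 1, by have := hmod j; omega⟩ with hσ
  have hcomp : ∀ j, delIdx i (σ j) = ρ j := by
    intro j
    have hnej := hne j
    have hmj := hmod j
    simp only [hσ]
    split_ifs with h
    · simp only [delIdx, hρ]
      rw [dif_pos (by simpa using h)]
    · simp only [delIdx, hρ]
      rw [dif_neg (by simp; omega)]
      exact Fin.ext (by simp; omega)
  have hσinj : Function.Injective σ := by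
    intro j k h
    apply hρinj
    rw [← hcomp j, ← hcomp k, h]
  have hσbij := Finite.injective_iff_bijective.mp hσinj
  set E : Fin (2*n-1) ≃ Fin (2*n-1) := Equiv.ofBijective σ hσbij with hE
  set d : ℕ → ℝ := fun t => if (iv + 1 + t) % 2 = 0 then (4:ℝ) else 3 with hd
  set bb : ℕ → ℝ := fun t => if (iv + 1 + t) % (2*n) = 2*n - 1 then e else -1 with hbb
  have hmain : (cyc n e).submatrix ρ ρ = tri d bb bb (2*n-1) := by
    ext j k
    have hj := j.isLt; have hk := k.isLt
    simp only [submatrix_apply, hρ, cyc_apply, tri, of_apply, hd, hbb]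
    rcases hrep j with ⟨h1,h2⟩ | ⟨h1,h2⟩ <;> rcases hrep k with ⟨h3,h4⟩ | ⟨h3,h4⟩ <;>
      simp only [h2, h4] <;> split_ifs <;> first | rfl | omega
  calc ((cyc n e).submatrix (delIdx i) (delIdx i)).det
      = (((cyc n e).submatrix (delIdx i) (delIdx i)).submatrix E E).det :=
        (Matrix.det_submatrix_equiv_self E _).symm
    _ = ((cyc n e).submatrix ρ ρ).det := by
        rw [Matrix.submatrix_submatrix]
        have hfe : (delIdx i ∘ ⇑E) = ρ := funext fun j => hcomp j
        rw [hfe]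
    _ = (tri d bb bb (2*n-1)).det := by rw [hmain]
    _ = W (iv + 1) (2*n-1) := by
        apply tri_det_W _ _ _ _ _ (fun t => rfl)
        intro t
        simp only [hbb]
        split_ifs
        · exact he
        · norm_num

lemma W_rec (p m : ℕ) : W p (m+4) = 10 * W p (m+2) - W p m := by
  have e1 : W p (m+4) = (if p%2=0 then (4:ℝ) else 3) * W (p+1) (m+3) - W p (m+2) := by
    rw [show m+4 = (m+2)+2 by omega, W]
  have e2 : W (p+1) (m+3) = (if (p+1)%2=0 then (4:ℝ) else 3) * W (p+2) (m+2) - W (p+1) (m+1) := by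
    rw [show m+3 = (m+1)+2 by omega, W]
  have e3 : W p (m+2) = (if p%2=0 then (4:ℝ) else 3) * W (p+1) (m+1) - W p m := by rw [W]
  have e4 : W (p+2) (m+2) = W p (m+2) := W_congr _ _ _ (by omega)
  have hd : (if p%2=0 then (4:ℝ) else 3) * (if (p+1)%2=0 then (4:ℝ) else 3) = 12 := by
    rcases Nat.mod_two_eq_zero_or_one p with h | h <;>
      simp [h, show (p+1)%2 = 1 - p%2 by omega] <;> norm_num
  rw [e1, e2, e4]
  linear_combination W p (m+2) * hd + e3

lemma sum_alt (A B : ℝ) : ∀ k : ℕ,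
    ∑ i ∈ Finset.range (2*k), (if (i+1) % 2 = 0 then A else B) = k * (A+B) := by
  intro k
  induction k with
  | zero => simp
  | succ k ih =>
    rw [show 2*(k+1) = (2*k)+1+1 by ring, Finset.sum_range_succ, Finset.sum_range_succ, ih]
    rw [if_neg (by omega), if_pos (by omega)]
    push_cast; ring

lemma W_closed : ∀ k : ℕ, W 0 (2*k+1) + W 1 (2*k+1) =
    7*Real.sqrt 6/24 * ((Real.sqrt 3 + Real.sqrt 2)^(2*k+2) - (Real.sqrt 3 - Real.sqrt 2)^(2*k+2)) := by
  have ha : Real.sqrt 2 ^ 2 = 2 := Real.sq_sqrt (by norm_num)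
  have hb : Real.sqrt 3 ^ 2 = 3 := Real.sq_sqrt (by norm_num)
  have h6 : Real.sqrt 6 = Real.sqrt 2 * Real.sqrt 3 := by
    rw [show (6:ℝ) = 2*3 by norm_num, Real.sqrt_mul (by norm_num)]
  set a := Real.sqrt 2
  set b := Real.sqrt 3
  have hp : (b+a)^4 = 10*(b+a)^2 - 1 := by
    linear_combination (-8 + 6*b^2 + 4*a*b + a^2) * ha + (5 + b^2 + 4*a*b) * hb
  have hm : (b-a)^4 = 10*(b-a)^2 - 1 := by
    linear_combination (-8 + 6*b^2 - 4*a*b + a^2) * ha + (5 + b^2 - 4*a*b) * hb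
  intro k
  induction k using Nat.strong_induction_on with
  | _ k ih =>
    match k with
    | 0 =>
      norm_num [W, h6]
      linear_combination (-7/6*b^2) * ha + (-7/3) * hb
    | 1 =>
      norm_num [W, h6]
      linear_combination (-14/3*b^2 - 7/3*b^4 - 7/3*a^2*b^2) * ha + (-70/3 - 14/3*b^2) * hb
    | (k+2) =>
      have r0 : W 0 (2*(k+2)+1) = 10 * W 0 (2*(k+1)+1) - W 0 (2*k+1) := by
        rw [show 2*(k+2)+1 = (2*k+1)+4 by ring, W_rec, show (2*k+1)+2 = 2*(k+1)+1 by ring]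
      have r1 : W 1 (2*(k+2)+1) = 10 * W 1 (2*(k+1)+1) - W 1 (2*k+1) := by
        rw [show 2*(k+2)+1 = (2*k+1)+4 by ring, W_rec, show (2*k+1)+2 = 2*(k+1)+1 by ring]
      have pp : (b+a)^(2*(k+2)+2) = 10*(b+a)^(2*(k+1)+2) - (b+a)^(2*k+2) := by
        rw [show 2*(k+2)+2 = (2*k+2)+4 by ring, pow_add,
          show 2*(k+1)+2 = (2*k+2)+2 by ring, pow_add, hp]
        ring
      have pm : (b-a)^(2*(k+2)+2) = 10*(b-a)^(2*(k+1)+2) - (b-a)^(2*k+2) := by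
        rw [show 2*(k+2)+2 = (2*k+2)+4 by ring, pow_add,
          show 2*(k+1)+2 = (2*k+2)+2 by ring, pow_add, hm]
        ring
      rw [r0, r1, pp, pm]
      have i1 := ih (k+1) (by omega)
      have i2 := ih k (by omega)
      linear_combination 10 * i1 - i2

/-- For `n ≥ 2`, the sums of the `(2n−1) × (2n−1)` principal minors of `N` and of
`N'` agree and equal
`(7√6/192)[(4 − 2√6)(√3−√2)^{2n−2} − (4 + 2√6)(√3+√2)^{2n−2}]
 + (7√3/48)[(4n − 2√6 n + 1)(√3−√2)^{2n−1} + (4n + 2√6 n + 1)(√3+√2)^{2n−1}]`. -/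
theorem sum_principal_minors_Nmat (n : ℕ) (hn : 2 ≤ n) :
    (∑ i : Fin (2 * n), ((Nmat n).submatrix (delIdx i) (delIdx i)).det =
        7 * Real.sqrt 6 / 192 *
            ((4 - 2 * Real.sqrt 6) * (Real.sqrt 3 - Real.sqrt 2) ^ (2 * n - 2) -
              (4 + 2 * Real.sqrt 6) * (Real.sqrt 3 + Real.sqrt 2) ^ (2 * n - 2)) +
          7 * Real.sqrt 3 / 48 *
            ((4 * (n : ℝ) - 2 * Real.sqrt 6 * (n : ℝ) + 1) *
                (Real.sqrt 3 - Real.sqrt 2) ^ (2 * n - 1) +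
              (4 * (n : ℝ) + 2 * Real.sqrt 6 * (n : ℝ) + 1) *
                (Real.sqrt 3 + Real.sqrt 2) ^ (2 * n - 1))) ∧
    (∑ i : Fin (2 * n), ((Nmat' n).submatrix (delIdx i) (delIdx i)).det =
        7 * Real.sqrt 6 / 192 *
            ((4 - 2 * Real.sqrt 6) * (Real.sqrt 3 - Real.sqrt 2) ^ (2 * n - 2) -
              (4 + 2 * Real.sqrt 6) * (Real.sqrt 3 + Real.sqrt 2) ^ (2 * n - 2)) +
          7 * Real.sqrt 3 / 48 *
            ((4 * (n : ℝ) - 2 * Real.sqrt 6 * (n : ℝ) + 1) *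
                (Real.sqrt 3 - Real.sqrt 2) ^ (2 * n - 1) +
              (4 * (n : ℝ) + 2 * Real.sqrt 6 * (n : ℝ) + 1) *
                (Real.sqrt 3 + Real.sqrt 2) ^ (2 * n - 1))) := by
  have ha : Real.sqrt 2 ^ 2 = 2 := Real.sq_sqrt (by norm_num)
  have hb : Real.sqrt 3 ^ 2 = 3 := Real.sq_sqrt (by norm_num)
  have h6 : Real.sqrt 6 = Real.sqrt 2 * Real.sqrt 3 := by
    rw [show (6:ℝ) = 2*3 by norm_num, Real.sqrt_mul (by norm_num)]
  have key : ∀ e : ℝ, e * e = 1 →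
      ∑ i : Fin (2 * n), ((cyc n e).submatrix (delIdx i) (delIdx i)).det =
        7 * Real.sqrt 6 / 192 *
            ((4 - 2 * Real.sqrt 6) * (Real.sqrt 3 - Real.sqrt 2) ^ (2 * n - 2) -
              (4 + 2 * Real.sqrt 6) * (Real.sqrt 3 + Real.sqrt 2) ^ (2 * n - 2)) +
          7 * Real.sqrt 3 / 48 *
            ((4 * (n : ℝ) - 2 * Real.sqrt 6 * (n : ℝ) + 1) *
                (Real.sqrt 3 - Real.sqrt 2) ^ (2 * n - 1) +
              (4 * (n : ℝ) + 2 * Real.sqrt 6 * (n : ℝ) + 1) *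
                (Real.sqrt 3 + Real.sqrt 2) ^ (2 * n - 1)) := by
    intro e he
    have step1 : ∑ i : Fin (2 * n), ((cyc n e).submatrix (delIdx i) (delIdx i)).det
        = ∑ i : Fin (2 * n), W (i.val + 1) (2*n - 1) :=
      Finset.sum_congr rfl (fun i _ => minor_det n hn e he i)
    have hW : ∀ t : ℕ, W (t+1) (2*n-1) =
        if (t+1) % 2 = 0 then W 0 (2*n-1) else W 1 (2*n-1) := by
      intro t
      rcases Nat.mod_two_eq_zero_or_one (t+1) with h | h
      · rw [if_pos h]; exact W_congr _ _ _ (by omega)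
      · rw [if_neg (by omega)]; exact W_congr _ _ _ (by omega)
    rw [step1, Fin.sum_univ_eq_sum_range (fun t => W (t+1) (2*n-1)) (2*n),
      Finset.sum_congr rfl (fun t _ => hW t), sum_alt, show 2*n-1 = 2*(n-1)+1 by omega,
      W_closed (n-1)]
    have hexp2 : 2*(n-1)+2 = (2*n-2)+2 := by omega
    have hexp1 : 2*(n-1)+1 = (2*n-2)+1 := by omega
    rw [hexp2, hexp1, pow_add, pow_add, pow_succ, pow_succ, h6]
    set a := Real.sqrt 2
    set b := Real.sqrt 3
    set u := (b+a)^(2*n-2) with hu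
    set v := (b-a)^(2*n-2) with hv
    have hcast : (n:ℝ) = ((n-1 : ℕ) : ℝ) + 1 := by
      have : n - 1 + 1 = n := by omega
      rw [← this]; push_cast; ring
    rw [hcast]
    set N := ((n-1 : ℕ) : ℝ) + 1 with hN
    linear_combination (7/96*b^2*v + 7/24*b^2*v*N + 7/96*b^2*u + 7/24*b^2*u*N
      - 7/24*a*b*v*N + 7/24*a*b*u*N) * ha
  constructor
  · rw [show Nmat n = cyc n (-1) from rfl]
    exact key (-1) (by norm_num)
  · rw [show Nmat' n = cyc n 1 from rfl]
    exact key 1 (by norm_num)
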